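/- arXiv:0712.3599 — 4 statements merged into one kernel-verified Lean document; each statement's English description precedes it below -/
import Mathlib

section
/- If g : ℝ^m → ℝ is strongly convex with modulus c > 0, then the gradient of its Legendre–Fenchel conjugate g* is Lipschitz with constant 1/c: ‖∇g*(s₁) − ∇g*(s₂)‖ ≤ (1/c)‖s₁ − s₂‖ for all s₁, s₂ where g* is differentiable. -/
/-!
The conjugate `g*` is a supremum of affine functions, hence convex. Strong convexity of `g`
makes `g*` `c⁻¹`-smooth: testing the supremum defining `g* (a s₁ + (1 - a) s₂)` at convex
combinations `a x₁ + (1 - a) x₂` and using Young's inequality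
`⟪u, v⟫ ≤ ‖u‖² / (2c) + c ‖v‖² / 2` shows that chords of `g*` lie at most
`a (1 - a) ‖s₁ - s₂‖² / (2c)` above its graph. Where `g*` is differentiable, convexity and
smoothness give a linear lower and a quadratic upper tangent bound; comparing them at
`s₁ - c (G₁ - G₂)`, and symmetrically, yields the cocoercivity
`c ‖G₁ - G₂‖² ≤ ⟪G₁ - G₂, s₁ - s₂⟫`, and Cauchy–Schwarz finishes.
-/

open scoped RealInnerProductSpace
open Set

variable {E : Type*} [NormedAddCommGroup E] [InnerProductSpace ℝ E]

theorem real_inner_le_inv_mul_sq_add_mul_sq {c : ℝ} (hc : 0 < c) (u v : E) :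
    ⟪u, v⟫ ≤ c⁻¹ / 2 * ‖u‖ ^ 2 + c / 2 * ‖v‖ ^ 2 := by
  have h := norm_sub_sq_real u (c • v)
  rw [real_inner_smul_right, norm_smul, Real.norm_of_nonneg hc.le] at h
  have hnonneg : 0 ≤ c⁻¹ / 2 * ‖u - c • v‖ ^ 2 := by positivity
  rw [h] at hnonneg
  field_simp at hnonneg ⊢
  nlinarith

theorem IsLUB.mul_add_mul_le {S T : Set ℝ} {u v a b B : ℝ} (hu : IsLUB S u) (hv : IsLUB T v)
    (ha : 0 ≤ a) (hb : 0 ≤ b) (hab : a + b = 1) (h : ∀ y ∈ S, ∀ z ∈ T, a * y + b * z ≤ B) :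
    a * u + b * v ≤ B := by
  refine le_of_forall_pos_le_add fun ε hε => ?_
  obtain ⟨y, hyS, hy, -⟩ := hu.exists_between (sub_lt_self u hε)
  obtain ⟨z, hzT, hz, -⟩ := hv.exists_between (sub_lt_self v hε)
  nlinarith [h y hyS z hzT]

section Conjugate

variable {g gstar : E → ℝ}

theorem convexOn_of_isLUB_conjugate
    (hgstar : ∀ s, IsLUB {y : ℝ | ∃ x, y = ⟪s, x⟫ - g x} (gstar s)) :
    ConvexOn ℝ univ gstar := by
  refine ⟨convex_univ, fun t₁ _ t₂ _ a b ha hb hab => (hgstar _).2 ?_⟩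
  rintro y ⟨x, rfl⟩
  have h₁ := (hgstar t₁).1 ⟨x, rfl⟩
  have h₂ := (hgstar t₂).1 ⟨x, rfl⟩
  obtain rfl := eq_sub_of_add_eq' hab
  rw [inner_add_left, real_inner_smul_left, real_inner_smul_left, smul_eq_mul, smul_eq_mul]
  linarith [mul_le_mul_of_nonneg_left h₁ ha, mul_le_mul_of_nonneg_left h₂ hb]

/-- `StrongConcaveOn s (-K) f` says that chords of `f` lie at most `a b K ‖x - y‖² / 2` above its
graph, i.e. that `f` is `K`-smooth. -/
theorem strongConcaveOn_of_isLUB_conjugate {c : ℝ} (hc : 0 < c) (hg : StrongConvexOn univ c g)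
    (hgstar : ∀ s, IsLUB {y : ℝ | ∃ x, y = ⟪s, x⟫ - g x} (gstar s)) :
    StrongConcaveOn univ (-c⁻¹) gstar := by
  refine ⟨convex_univ, fun t₁ _ t₂ _ a b ha hb hab => ?_⟩
  rw [smul_eq_mul, smul_eq_mul, ← le_sub_iff_add_le]
  refine (hgstar t₁).mul_add_mul_le (hgstar t₂) ha hb hab ?_
  rintro _ ⟨x₁, rfl⟩ _ ⟨x₂, rfl⟩
  have hstrong := hg.2 (mem_univ x₁) (mem_univ x₂) ha hb hab
  have hsup := (hgstar (a • t₁ + b • t₂)).1 ⟨a • x₁ + b • x₂, rfl⟩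
  have hyoung := real_inner_le_inv_mul_sq_add_mul_sq hc (t₁ - t₂) (x₁ - x₂)
  have hinner : ⟪a • t₁ + b • t₂, a • x₁ + b • x₂⟫
      = a * ⟪t₁, x₁⟫ + b * ⟪t₂, x₂⟫ - a * b * ⟪t₁ - t₂, x₁ - x₂⟫ := by
    obtain rfl := eq_sub_of_add_eq' hab
    simp only [inner_add_left, inner_add_right, inner_sub_left, inner_sub_right,
      real_inner_smul_left, real_inner_smul_right]
    ring
  simp only [smul_eq_mul] at hstrong
  rw [hinner] at hsup
  nlinarith [mul_nonneg ha hb]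

end Conjugate

theorem ConvexOn.tangent_le_of_hasFDerivAt {s : Set E} {f : E → ℝ} {f' : E →L[ℝ] ℝ} {x y : E}
    (hf : ConvexOn ℝ s f) (hx : x ∈ s) (hy : y ∈ s) (h : HasFDerivAt f f' x) :
    f x + f' (y - x) ≤ f y := by
  set ℓ : ℝ →ᵃ[ℝ] E := AffineMap.lineMap x y
  have hℓ₀ : ℓ 0 = x := AffineMap.lineMap_apply_zero x y
  have hℓ₁ : ℓ 1 = y := AffineMap.lineMap_apply_one x y
  have hline : HasDerivAt (f ∘ ℓ) (f' (y - x)) 0 := by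
    rw [← hℓ₀] at h
    exact h.comp_hasDerivAt 0 AffineMap.hasDerivAt_lineMap
  have := (hf.comp_affineMap ℓ).le_slope_of_hasDerivAt
    (by rwa [mem_preimage, hℓ₀]) (by rwa [mem_preimage, hℓ₁]) zero_lt_one hline
  simp only [slope_def_field, Function.comp_apply, hℓ₀, hℓ₁, sub_zero, div_one] at this
  linarith

theorem StrongConcaveOn.le_tangent_add_of_hasFDerivAt {s : Set E} {f : E → ℝ} {f' : E →L[ℝ] ℝ}
    {K : ℝ} {x y : E} (hf : StrongConcaveOn s (-K) f) (hx : x ∈ s) (hy : y ∈ s)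
    (h : HasFDerivAt f f' x) :
    f y ≤ f x + f' (y - x) + K / 2 * ‖y - x‖ ^ 2 := by
  have hconv : ConvexOn ℝ s fun z => K / 2 * ‖z‖ ^ 2 - f z := by
    refine (strongConcaveOn_iff_convex.1 hf).neg.congr fun z _ => ?_
    simp only [Pi.neg_apply]
    ring
  have hq : HasFDerivAt (fun z => K / 2 * ‖z‖ ^ 2 - f z)
      ((K / 2) • (2 • innerSL ℝ x) - f') x :=
    ((hasStrictFDerivAt_norm_sq x).hasFDerivAt.const_mul (K / 2)).sub h
  have := hconv.tangent_le_of_hasFDerivAt hx hy hq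
  have hsq := norm_add_sq_real x (y - x)
  rw [add_sub_cancel] at hsq
  have hq' : ((K / 2) • (2 • innerSL ℝ x) - f') (y - x) = K * ⟪x, y - x⟫ - f' (y - x) := by
    simp only [sub_apply, smul_apply, coe_innerSL_apply, nsmul_eq_mul, Nat.cast_ofNat, smul_eq_mul]
    ring
  rw [hq', hsq] at this
  linarith

theorem half_inv_mul_sq_norm_sub_le_of_tangent_bounds {f : E → ℝ} {K : ℝ} {x₁ x₂ G₁ G₂ : E}
    (hK : 0 < K) (hlow : ∀ y, f x₂ + ⟪G₂, y - x₂⟫ ≤ f y)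
    (hup : ∀ y, f y ≤ f x₁ + ⟪G₁, y - x₁⟫ + K / 2 * ‖y - x₁‖ ^ 2) :
    K⁻¹ / 2 * ‖G₁ - G₂‖ ^ 2 ≤ f x₁ - f x₂ - ⟪G₂, x₁ - x₂⟫ := by
  set d := G₁ - G₂
  set y := x₁ - K⁻¹ • d
  have hy₁ : y - x₁ = -(K⁻¹ • d) := by simp only [y]; abel
  have hy₂ : y - x₂ = (x₁ - x₂) - K⁻¹ • d := by simp only [y]; abel
  have hd : ⟪G₁, d⟫ - ⟪G₂, d⟫ = ‖d‖ ^ 2 := by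
    rw [← inner_sub_left, real_inner_self_eq_norm_sq]
  have hK₂ : K / 2 * (K⁻¹ ^ 2 * ‖d‖ ^ 2) = K⁻¹ / 2 * ‖d‖ ^ 2 := by
    field_simp
  have h₁ := hlow y
  have h₂ := hup y
  rw [hy₂, inner_sub_right, real_inner_smul_right] at h₁
  rw [hy₁, inner_neg_right, real_inner_smul_right, norm_neg, norm_smul, mul_pow,
    Real.norm_of_nonneg (inv_nonneg.2 hK.le), hK₂] at h₂
  have hd' : K⁻¹ * ⟪G₁, d⟫ - K⁻¹ * ⟪G₂, d⟫ = K⁻¹ * ‖d‖ ^ 2 := by rw [← mul_sub, hd]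
  linarith

variable [CompleteSpace E]

theorem sq_norm_sub_le_mul_inner_of_hasGradientAt {f : E → ℝ} {K : ℝ} {x₁ x₂ G₁ G₂ : E}
    (hK : 0 < K) (hf : ConvexOn ℝ univ f) (hf' : StrongConcaveOn univ (-K) f)
    (h₁ : HasGradientAt f G₁ x₁) (h₂ : HasGradientAt f G₂ x₂) :
    ‖G₁ - G₂‖ ^ 2 ≤ K * ⟪G₁ - G₂, x₁ - x₂⟫ := by
  have hlow {x G : E} (h : HasGradientAt f G x) (y : E) : f x + ⟪G, y - x⟫ ≤ f y :=
    hf.tangent_le_of_hasFDerivAt (mem_univ x) (mem_univ y) h.hasFDerivAt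
  have hup {x G : E} (h : HasGradientAt f G x) (y : E) :
      f y ≤ f x + ⟪G, y - x⟫ + K / 2 * ‖y - x‖ ^ 2 :=
    hf'.le_tangent_add_of_hasFDerivAt (mem_univ x) (mem_univ y) h.hasFDerivAt
  have h₁₂ := half_inv_mul_sq_norm_sub_le_of_tangent_bounds hK (hlow h₂) (hup h₁)
  have h₂₁ := half_inv_mul_sq_norm_sub_le_of_tangent_bounds hK (hlow h₁) (hup h₂)
  rw [norm_sub_rev, ← neg_sub x₁ x₂, inner_neg_right] at h₂₁
  have hsum : K⁻¹ * ‖G₁ - G₂‖ ^ 2 ≤ ⟪G₁ - G₂, x₁ - x₂⟫ := by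
    rw [inner_sub_left]; linarith
  calc ‖G₁ - G₂‖ ^ 2 = K * (K⁻¹ * ‖G₁ - G₂‖ ^ 2) := by field_simp
    _ ≤ K * ⟪G₁ - G₂, x₁ - x₂⟫ := by gcongr

theorem norm_sub_le_mul_norm_sub_of_hasGradientAt {f : E → ℝ} {K : ℝ} {x₁ x₂ G₁ G₂ : E}
    (hK : 0 < K) (hf : ConvexOn ℝ univ f) (hf' : StrongConcaveOn univ (-K) f)
    (h₁ : HasGradientAt f G₁ x₁) (h₂ : HasGradientAt f G₂ x₂) :
    ‖G₁ - G₂‖ ≤ K * ‖x₁ - x₂‖ := by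
  have hcoer := sq_norm_sub_le_mul_inner_of_hasGradientAt hK hf hf' h₁ h₂
  have hcs := real_inner_le_norm (G₁ - G₂) (x₁ - x₂)
  rcases (norm_nonneg (G₁ - G₂)).eq_or_lt with hzero | hpos
  · rw [← hzero]; positivity
  · nlinarith

/-- The gradient of the Legendre–Fenchel conjugate of a strongly convex function
with modulus `c > 0` is Lipschitz with constant `1/c`. -/
theorem stmt4 {m : ℕ} (c : ℝ) (hc : 0 < c)
    (g gstar : EuclideanSpace ℝ (Fin m) → ℝ)
    (hstrong : ∀ x₁ x₂ : EuclideanSpace ℝ (Fin m), ∀ a ∈ Set.Icc (0:ℝ) 1,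
      g (a • x₁ + (1 - a) • x₂)
        ≤ a * g x₁ + (1 - a) * g x₂ - c / 2 * a * (1 - a) * ‖x₁ - x₂‖ ^ 2)
    (hgstar : ∀ s, IsLUB {y : ℝ | ∃ x, y = ⟪s, x⟫ - g x} (gstar s))
    (s₁ s₂ G₁ G₂ : EuclideanSpace ℝ (Fin m))
    (h1 : HasGradientAt gstar G₁ s₁) (h2 : HasGradientAt gstar G₂ s₂) :
    ‖G₁ - G₂‖ ≤ (1 / c) * ‖s₁ - s₂‖ := by
  have hg : StrongConvexOn univ c g := by
    refine ⟨convex_univ, fun x₁ _ x₂ _ a b ha hb hab => ?_⟩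
    obtain rfl := eq_sub_of_add_eq' hab
    have := hstrong x₁ x₂ a ⟨ha, by linarith⟩
    simp only [smul_eq_mul]
    linarith
  rw [one_div]
  exact norm_sub_le_mul_norm_sub_of_hasGradientAt (inv_pos.2 hc)
    (convexOn_of_isLUB_conjugate hgstar) (strongConcaveOn_of_isLUB_conjugate hc hg hgstar) h1 h2
end

section
/- One-dimensional geodesic potential formula: for u(x) = x log x + (1−x) log(1−x) on (0,1), f(x) = |x − 1/2|, and t > 0, the Legendre transform ψ(ρ) = sup_{x ∈ (0,1)}(ρx − u(x) − t f(x)) satisfies: ψ(ρ) = −t/2 + log(1 + e^{ρ+t}) for ρ < −t; ψ(ρ) = ρ/2 + log 2 for −t ≤ ρ ≤ t; and ψ(ρ) = t/2 + log(1 + e^{ρ−t}) for ρ > t. In particular ψ is C¹ on ℝ but its second derivative is discontinuous at ρ = ±t. -/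
noncomputable section
namespace Stmt10Aux
open Real Set Filter

def U (x : ℝ) : ℝ := x * Real.log x + (1 - x) * Real.log (1 - x)
def L (s : ℝ) : ℝ := Real.log (1 + Real.exp s)
def sg (s : ℝ) : ℝ := Real.exp s / (1 + Real.exp s)

lemma oep (s : ℝ) : 0 < 1 + Real.exp s := by positivity

lemma young (s : ℝ) {x : ℝ} (hx : x ∈ Ioo (0:ℝ) 1) : s * x - U x ≤ L s := by
  obtain ⟨hx0, hx1⟩ := hx
  have h1x : 0 < 1 - x := by linarith
  have hp1 : 0 < Real.exp s / x := by positivity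
  have hp2 : 0 < (1 - x)⁻¹ := by positivity
  have h := Real.geom_mean_le_arith_mean2_weighted hx0.le h1x.le hp1.le hp2.le
    (by ring : x + (1 - x) = 1)
  have hlhs : 0 < (Real.exp s / x) ^ x * ((1 - x)⁻¹) ^ (1 - x) := by positivity
  have h2 : Real.log ((Real.exp s / x) ^ x * ((1 - x)⁻¹) ^ (1 - x)) ≤
      Real.log (1 + Real.exp s) := by
    apply Real.log_le_log hlhs
    calc (Real.exp s / x) ^ x * ((1 - x)⁻¹) ^ (1 - x)
        ≤ x * (Real.exp s / x) + (1 - x) * (1 - x)⁻¹ := h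
      _ = 1 + Real.exp s := by field_simp; ring
  rw [Real.log_mul (ne_of_gt (by positivity)) (ne_of_gt (by positivity)),
    Real.log_rpow hp1, Real.log_rpow hp2, Real.log_div (Real.exp_ne_zero s) hx0.ne',
    Real.log_exp, Real.log_inv] at h2
  unfold U L
  linarith [h2]

lemma sg_mem (s : ℝ) : sg s ∈ Ioo (0:ℝ) 1 := by
  constructor
  · unfold sg; positivity
  · unfold sg
    rw [div_lt_one (oep s)]
    linarith [Real.exp_pos s]

lemma one_sub_sg (s : ℝ) : 1 - sg s = (1 + Real.exp s)⁻¹ := by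
  unfold sg
  field_simp
  ring

lemma attain_val (s : ℝ) : s * sg s - U (sg s) = L s := by
  have h1 : Real.log (sg s) = s - L s := by
    unfold sg L
    rw [Real.log_div (Real.exp_ne_zero s) (oep s).ne', Real.log_exp]
  have h2 : Real.log (1 - sg s) = - L s := by
    rw [one_sub_sg, Real.log_inv]; rfl
  have hsum : sg s + (1 - sg s) = 1 := by ring
  unfold U
  rw [h1, h2, one_sub_sg]
  have hsum2 : sg s + (1 + Real.exp s)⁻¹ = 1 := by
    unfold sg; field_simp; ring
  linear_combination (L s) * hsum2



lemma csSup_image_eq {g : ℝ → ℝ} {x₀ B : ℝ} (hx₀ : x₀ ∈ Ioo (0:ℝ) 1)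
    (hval : g x₀ = B) (hub : ∀ x ∈ Ioo (0:ℝ) 1, g x ≤ B) :
    sSup (g '' Ioo 0 1) = B := by
  apply le_antisymm
  · apply csSup_le ⟨g x₀, mem_image_of_mem _ hx₀⟩
    rintro y ⟨x, hx, rfl⟩; exact hub x hx
  · rw [← hval]
    exact le_csSup ⟨B, by rintro y ⟨x, hx, rfl⟩; exact hub x hx⟩ (mem_image_of_mem _ hx₀)

lemma U_ge {x : ℝ} (hx : x ∈ Ioo (0:ℝ) 1) : - U x ≤ Real.log 2 := by
  have := young 0 hx
  simp only [zero_mul, zero_sub, L, Real.exp_zero] at this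
  norm_num at this
  linarith

lemma psi_low {t ρ : ℝ} (ht : 0 < t) (h : ρ < -t) :
    sSup ((fun x => ρ * x - U x - t * |x - 1/2|) '' Ioo (0:ℝ) 1)
      = -t/2 + L (ρ + t) := by
  apply csSup_image_eq (sg_mem (ρ + t))
  · have hlt : sg (ρ + t) < 1/2 := by
      unfold sg
      rw [div_lt_iff₀ (oep _)]
      have : Real.exp (ρ + t) < 1 := by
        rw [← Real.exp_zero]
        exact Real.exp_lt_exp.2 (by linarith)
      linarith
    rw [abs_of_neg (by linarith)]
    linear_combination attain_val (ρ + t)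
  · intro x hx
    have h1 := young (ρ + t) hx
    have h2 : t * (-|x - 1/2|) ≤ t * (x - 1/2) :=
      mul_le_mul_of_nonneg_left (neg_abs_le _) ht.le
    linarith

lemma psi_high {t ρ : ℝ} (ht : 0 < t) (h : t < ρ) :
    sSup ((fun x => ρ * x - U x - t * |x - 1/2|) '' Ioo (0:ℝ) 1)
      = t/2 + L (ρ - t) := by
  apply csSup_image_eq (sg_mem (ρ - t))
  · have hgt : 1/2 < sg (ρ - t) := by
      unfold sg
      rw [lt_div_iff₀ (oep _)]
      have : 1 < Real.exp (ρ - t) := by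
        rw [← Real.exp_zero]
        exact Real.exp_lt_exp.2 (by linarith)
      linarith
    rw [abs_of_pos (by linarith)]
    linear_combination attain_val (ρ - t)
  · intro x hx
    have h1 := young (ρ - t) hx
    have h2 : t * (-|x - 1/2|) ≤ t * (-(x - 1/2)) :=
      mul_le_mul_of_nonneg_left (neg_le_neg (le_abs_self _)) ht.le
    linarith

lemma psi_mid {t ρ : ℝ} (ht : 0 < t) (h : ρ ∈ Icc (-t) t) :
    sSup ((fun x => ρ * x - U x - t * |x - 1/2|) '' Ioo (0:ℝ) 1)
      = ρ/2 + Real.log 2 := by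
  apply csSup_image_eq (⟨by norm_num, by norm_num⟩ : (1/2:ℝ) ∈ Ioo (0:ℝ) 1)
  · have hU : U (1/2) = - Real.log 2 := by
      have hl : Real.log (1/2 : ℝ) = - Real.log 2 := by rw [one_div, Real.log_inv]
      unfold U
      rw [show (1:ℝ) - 1/2 = 1/2 by norm_num, hl]
      ring
    simp only [hU]
    norm_num
    ring
  · intro x hx
    have h1 := U_ge hx
    have h2 : ρ * (x - 1/2) ≤ t * |x - 1/2| := by
      calc ρ * (x - 1/2) ≤ |ρ * (x - 1/2)| := le_abs_self _
        _ = |ρ| * |x - 1/2| := abs_mul _ _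
        _ ≤ t * |x - 1/2| := mul_le_mul_of_nonneg_right (abs_le.2 h) (abs_nonneg _)
    linarith


def Psi (t ρ : ℝ) : ℝ :=
  if ρ ≤ -t then -t/2 + L (ρ + t) else if ρ ≤ t then ρ/2 + Real.log 2
  else t/2 + L (ρ - t)

def Dv (t ρ : ℝ) : ℝ :=
  if ρ ≤ -t then sg (ρ + t) else if ρ ≤ t then 1/2 else sg (ρ - t)

lemma L_zero : L 0 = Real.log 2 := by
  unfold L; rw [Real.exp_zero]; norm_num

lemma sg_zero : sg 0 = 1/2 := by
  unfold sg; rw [Real.exp_zero]; norm_num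

lemma hasDerivAt_L (s : ℝ) : HasDerivAt L (sg s) s :=
  ((Real.hasDerivAt_exp s).const_add 1).log (oep s).ne'

lemma hasDerivAt_L_shift (c s : ℝ) :
    HasDerivAt (fun y => L (y + c)) (sg (s + c)) s := by
  have := (hasDerivAt_L (s + c)).comp s ((hasDerivAt_id s).add_const c)
  simpa [Function.comp_def] using this

lemma hasDerivAt_sg (s : ℝ) :
    HasDerivAt sg (Real.exp s / (1 + Real.exp s)^2) s := by
  have h := (Real.hasDerivAt_exp s).div ((Real.hasDerivAt_exp s).const_add 1) (oep s).ne'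
  refine h.congr_deriv ?_
  ring

lemma hasDerivAt_sg_shift (c s : ℝ) :
    HasDerivAt (fun y => sg (y + c)) (Real.exp (s + c) / (1 + Real.exp (s + c))^2) s := by
  have := (hasDerivAt_sg (s + c)).comp s ((hasDerivAt_id s).add_const c)
  simpa [Function.comp_def] using this

lemma hasDerivAt_Psi {t : ℝ} (ht : 0 < t) (ρ : ℝ) :
    HasDerivAt (Psi t) (Dv t ρ) ρ := by
  rcases lt_trichotomy ρ (-t) with h | h | h
  · have hg : HasDerivAt (fun y => -t/2 + L (y + t)) (sg (ρ + t)) ρ :=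
      (hasDerivAt_L_shift t ρ).const_add (-t/2)
    have he : (fun y => Psi t y) =ᶠ[nhds ρ] (fun y => -t/2 + L (y + t)) := by
      filter_upwards [Iio_mem_nhds h] with y hy
      simp [Psi, (mem_Iio.1 hy).le]
    rw [show Dv t ρ = sg (ρ + t) by simp [Dv, h.le]]
    exact hg.congr_of_eventuallyEq he
  · subst h
    have hleft : HasDerivWithinAt (Psi t) (sg 0) (Iic (-t)) (-t) := by
      have hg : HasDerivAt (fun y => -t/2 + L (y + t)) (sg (-t + t)) (-t) :=
        (hasDerivAt_L_shift t (-t)).const_add (-t/2)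
      rw [show (-t + t : ℝ) = 0 by ring] at hg
      apply hg.hasDerivWithinAt.congr
      · intro y hy; simp [Psi, (mem_Iic.1 hy : y ≤ -t)]
      · simp [Psi]
    have hright : HasDerivWithinAt (Psi t) (sg 0) (Ici (-t)) (-t) := by
      have hg : HasDerivAt (fun y => y/2 + Real.log 2) ((1:ℝ)/2) (-t) := by
        simpa using ((hasDerivAt_id (-t)).div_const 2).add_const (Real.log 2)
      rw [sg_zero]
      apply hg.hasDerivWithinAt.congr_of_eventuallyEq
      · filter_upwards [nhdsWithin_le_nhds (Iio_mem_nhds (show -t < t by linarith)),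
          self_mem_nhdsWithin] with y hy1 hy2
        rcases eq_or_lt_of_le (mem_Ici.1 hy2) with h' | h'
        · simp [Psi, ← h', L_zero]
        · simp [Psi, not_le.2 h', (mem_Iio.1 hy1).le]
      · simp [Psi, L_zero]
    have := hleft.union hright
    rw [Iic_union_Ici] at this
    rw [show Dv t (-t) = sg 0 by simp [Dv]]
    exact hasDerivWithinAt_univ.1 this
  · rcases lt_trichotomy ρ t with h2 | h2 | h2
    · have hg : HasDerivAt (fun y => y/2 + Real.log 2) ((1:ℝ)/2) ρ := by
        simpa using ((hasDerivAt_id ρ).div_const 2).add_const (Real.log 2)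
      have he : (fun y => Psi t y) =ᶠ[nhds ρ] (fun y => y/2 + Real.log 2) := by
        filter_upwards [Ioo_mem_nhds h h2] with y hy
        simp [Psi, not_le.2 hy.1, hy.2.le]
      rw [show Dv t ρ = 1/2 by simp [Dv, not_le.2 h, h2.le]]
      exact hg.congr_of_eventuallyEq he
    · rw [h2]
      have hleft : HasDerivWithinAt (Psi t) ((1:ℝ)/2) (Iic t) t := by
        have hg : HasDerivAt (fun y => y/2 + Real.log 2) ((1:ℝ)/2) t := by
          simpa using ((hasDerivAt_id t).div_const 2).add_const (Real.log 2)
        apply hg.hasDerivWithinAt.congr_of_eventuallyEq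
        · filter_upwards [nhdsWithin_le_nhds (Ioi_mem_nhds (show -t < t by linarith)),
            self_mem_nhdsWithin] with y hy1 hy2
          simp [Psi, not_le.2 (mem_Ioi.1 hy1), (mem_Iic.1 hy2 : y ≤ t)]
        · simp [Psi, not_le.2 (show -t < t by linarith), le_refl]
      have hright : HasDerivWithinAt (Psi t) ((1:ℝ)/2) (Ici t) t := by
        have hg : HasDerivAt (fun y => t/2 + L (y + -t)) (sg (t + -t)) t :=
          (hasDerivAt_L_shift (-t) t).const_add (t/2)
        rw [show (t + -t : ℝ) = 0 by ring, sg_zero] at hg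
        apply hg.hasDerivWithinAt.congr
        · intro y hy
          rcases eq_or_lt_of_le (mem_Ici.1 hy) with h' | h'
          · simp [Psi, ← h', not_le.2 (show -t < t by linarith), L_zero]
          · simp [Psi, not_le.2 h', not_le.2 (show -t < y by linarith),
              show (y + -t : ℝ) = y - t by ring]
        · simp [Psi, not_le.2 (show -t < t by linarith), L_zero]
      have := hleft.union hright
      rw [Iic_union_Ici] at this
      rw [show Dv t t = 1/2 by simp [Dv, not_le.2 (show -t < t by linarith)]]
      exact hasDerivWithinAt_univ.1 this
    · have hg : HasDerivAt (fun y => t/2 + L (y + -t)) (sg (ρ + -t)) ρ :=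
        (hasDerivAt_L_shift (-t) ρ).const_add (t/2)
      have he : (fun y => Psi t y) =ᶠ[nhds ρ] (fun y => t/2 + L (y + -t)) := by
        filter_upwards [Ioi_mem_nhds h2] with y hy
        have hy' := mem_Ioi.1 hy
        simp [Psi, not_le.2 (show -t < y by linarith [hy']), not_le.2 hy']
        rw [show (y + -t : ℝ) = y - t by ring]
      rw [show Dv t ρ = sg (ρ - t) by simp [Dv, not_le.2 h, not_le.2 h2]]
      rw [show (ρ - t : ℝ) = ρ + -t by ring]
      exact hg.congr_of_eventuallyEq he

lemma continuous_sg : Continuous sg :=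
  Real.continuous_exp.div (continuous_const.add Real.continuous_exp) fun s => (oep s).ne'

lemma Dv_eq (t : ℝ) (ht : 0 < t) :
    Dv t = fun ρ => sg (min (ρ + t) 0 + max (ρ - t) 0) := by
  funext ρ
  rcases le_or_gt ρ (-t) with h | h
  · rw [min_eq_left (by linarith), max_eq_right (by linarith)]
    simp [Dv, h]
  · rcases le_or_gt ρ t with h2 | h2
    · rw [min_eq_right (by linarith), max_eq_right (by linarith)]
      simp [Dv, not_le.2 h, h2, sg_zero]
    · rw [min_eq_right (by linarith), max_eq_left (by linarith)]
      simp [Dv, not_le.2 h, not_le.2 h2]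

lemma continuous_Dv (t : ℝ) (ht : 0 < t) : Continuous (Dv t) := by
  rw [Dv_eq t ht]
  exact continuous_sg.comp
    (((continuous_id.add continuous_const).min continuous_const).add
      ((continuous_id.sub continuous_const).max continuous_const))

lemma not_diff_Dv_pos (t : ℝ) (ht : 0 < t) : ¬ DifferentiableAt ℝ (Dv t) t := by
  intro hd
  have h1 : HasDerivWithinAt (Dv t) (deriv (Dv t) t) (Iic t) t :=
    hd.hasDerivAt.hasDerivWithinAt
  have h1' : HasDerivWithinAt (Dv t) (deriv (Dv t) t) (Ici t) t :=
    hd.hasDerivAt.hasDerivWithinAt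
  have h2 : HasDerivWithinAt (Dv t) 0 (Iic t) t := by
    apply (hasDerivAt_const t ((1:ℝ)/2)).hasDerivWithinAt.congr_of_eventuallyEq
    · filter_upwards [nhdsWithin_le_nhds (Ioi_mem_nhds (show -t < t by linarith)),
        self_mem_nhdsWithin] with y hy1 hy2
      simp [Dv, not_le.2 (mem_Ioi.1 hy1), (mem_Iic.1 hy2 : y ≤ t)]
    · simp [Dv, not_le.2 (show -t < t by linarith)]
  have h3 : HasDerivWithinAt (Dv t) (1/4) (Ici t) t := by
    have hg : HasDerivAt (fun y => sg (y + -t))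
        (Real.exp (t + -t) / (1 + Real.exp (t + -t))^2) t := hasDerivAt_sg_shift (-t) t
    rw [show (t + -t : ℝ) = 0 by ring, Real.exp_zero] at hg
    norm_num at hg
    apply hg.hasDerivWithinAt.congr
    · intro y hy
      rcases eq_or_lt_of_le (mem_Ici.1 hy) with h' | h'
      · simp [Dv, ← h', not_le.2 (show -t < t by linarith), sg_zero]
      · simp [Dv, not_le.2 h', not_le.2 (show -t < y by linarith),
          show (y + -t : ℝ) = y - t by ring]
    · simp [Dv, not_le.2 (show -t < t by linarith), sg_zero]
  have e1 : deriv (Dv t) t = 0 := by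
    rw [← h1.derivWithin (uniqueDiffOn_Iic t t (mem_Iic.2 le_rfl)),
      h2.derivWithin (uniqueDiffOn_Iic t t (mem_Iic.2 le_rfl))]
  have e2 : deriv (Dv t) t = 1/4 := by
    rw [← h1'.derivWithin (uniqueDiffOn_Ici t t (mem_Ici.2 le_rfl)),
      h3.derivWithin (uniqueDiffOn_Ici t t (mem_Ici.2 le_rfl))]
  rw [e1] at e2
  norm_num at e2

lemma not_diff_Dv_neg (t : ℝ) (ht : 0 < t) : ¬ DifferentiableAt ℝ (Dv t) (-t) := by
  intro hd
  have h1 : HasDerivWithinAt (Dv t) (deriv (Dv t) (-t)) (Iic (-t)) (-t) :=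
    hd.hasDerivAt.hasDerivWithinAt
  have h1' : HasDerivWithinAt (Dv t) (deriv (Dv t) (-t)) (Ici (-t)) (-t) :=
    hd.hasDerivAt.hasDerivWithinAt
  have h2 : HasDerivWithinAt (Dv t) (1/4) (Iic (-t)) (-t) := by
    have hg : HasDerivAt (fun y => sg (y + t))
        (Real.exp (-t + t) / (1 + Real.exp (-t + t))^2) (-t) := hasDerivAt_sg_shift t (-t)
    rw [show (-t + t : ℝ) = 0 by ring, Real.exp_zero] at hg
    norm_num at hg
    apply hg.hasDerivWithinAt.congr
    · intro y hy; simp [Dv, (mem_Iic.1 hy : y ≤ -t)]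
    · simp [Dv]
  have h3 : HasDerivWithinAt (Dv t) 0 (Ici (-t)) (-t) := by
    apply (hasDerivAt_const (-t) ((1:ℝ)/2)).hasDerivWithinAt.congr_of_eventuallyEq
    · filter_upwards [nhdsWithin_le_nhds (Iio_mem_nhds (show -t < t by linarith)),
        self_mem_nhdsWithin] with y hy1 hy2
      rcases eq_or_lt_of_le (mem_Ici.1 hy2) with h' | h'
      · simp [Dv, ← h', sg_zero]
      · simp [Dv, not_le.2 h', (mem_Iio.1 hy1).le]
    · simp [Dv, sg_zero]
  have e1 : deriv (Dv t) (-t) = 1/4 := by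
    rw [← h1.derivWithin (uniqueDiffOn_Iic (-t) (-t) (mem_Iic.2 le_rfl)),
      h2.derivWithin (uniqueDiffOn_Iic (-t) (-t) (mem_Iic.2 le_rfl))]
  have e2 : deriv (Dv t) (-t) = 0 := by
    rw [← h1'.derivWithin (uniqueDiffOn_Ici (-t) (-t) (mem_Ici.2 le_rfl)),
      h3.derivWithin (uniqueDiffOn_Ici (-t) (-t) (mem_Ici.2 le_rfl))]
  rw [e1] at e2
  norm_num at e2

end Stmt10Aux
end

open Stmt10Aux in
/-- One-dimensional geodesic potential formula on ℂP¹ for `f(x) = |x - 1/2|`: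
explicit piecewise formulas for the Legendre transform of `u + t f`, which is
`C¹` but whose derivative fails to be differentiable at `ρ = ±t`. -/
theorem stmt10 (t : ℝ) (ht : 0 < t) :
    let u : ℝ → ℝ := fun x => x * Real.log x + (1 - x) * Real.log (1 - x)
    let ψ : ℝ → ℝ := fun ρ =>
      sSup ((fun x => ρ * x - u x - t * |x - 1 / 2|) '' Set.Ioo (0 : ℝ) 1)
    (∀ ρ < -t, ψ ρ = -t / 2 + Real.log (1 + Real.exp (ρ + t))) ∧
    (∀ ρ ∈ Set.Icc (-t) t, ψ ρ = ρ / 2 + Real.log 2) ∧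
    (∀ ρ > t, ψ ρ = t / 2 + Real.log (1 + Real.exp (ρ - t))) ∧
    (∀ ρ, DifferentiableAt ℝ ψ ρ) ∧ Continuous (deriv ψ) ∧
    ¬ DifferentiableAt ℝ (deriv ψ) t ∧ ¬ DifferentiableAt ℝ (deriv ψ) (-t) := by
  intro u ψ
  have hψ : ψ = Psi t := by
    funext ρ
    show sSup ((fun x => ρ * x - U x - t * |x - 1 / 2|) '' Set.Ioo (0 : ℝ) 1) = Psi t ρ
    rcases lt_or_ge ρ (-t) with h | h
    · rw [psi_low ht h]
      simp [Psi, h.le]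
    · rcases le_or_gt ρ t with h2 | h2
      · rw [psi_mid ht ⟨h, h2⟩]
        by_cases hb : ρ ≤ -t
        · have heq : ρ = -t := le_antisymm hb h
          rw [heq]
          simp [Psi, L_zero]
        · simp [Psi, hb, h2]
      · rw [psi_high ht h2]
        simp [Psi, not_le.2 (show -t < ρ by linarith), not_le.2 h2]
  rw [hψ]
  have hderiv : deriv (Psi t) = Dv t := funext fun ρ => (hasDerivAt_Psi ht ρ).deriv
  refine ⟨?_, ?_, ?_, ?_, ?_, ?_, ?_⟩
  · intro ρ h
    simp [Psi, h.le, L]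
  · intro ρ h
    by_cases hb : ρ ≤ -t
    · have heq : ρ = -t := le_antisymm hb h.1
      rw [heq]
      simp [Psi, L_zero]
    · simp [Psi, hb, h.2]
  · intro ρ h
    simp [Psi, not_le.2 (show -t < ρ by linarith), not_le.2 h, L]
  · intro ρ
    exact (hasDerivAt_Psi ht ρ).differentiableAt
  · rw [hderiv]
    exact continuous_Dv t ht
  · rw [hderiv]
    exact not_diff_Dv_pos t ht
  · rw [hderiv]
    exact not_diff_Dv_neg t ht
end

section
/- Envelope/derivative formula for the geodesic ray in t: let u : P → ℝ be strictly convex and continuous on a compact convex set P ⊂ ℝ^m, f : P → ℝ convex and continuous, and for t ≥ 0, ρ ∈ ℝ^m define ψ(t, ρ) = sup_{x ∈ P}(⟨ρ, x⟩ − u(x) − t f(x)), attained at the unique maximizer x_t(ρ). Then the right t-derivative of ψ(·, ρ) at t exists and equals −f(x_t(ρ)). -/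
open scoped RealInnerProductSpace

/-!
`ψ(·, ρ)` is a supremum of the affine functions `s ↦ ⟪ρ, x⟫ - u x - s f x`. Comparing the
values of the maximizers `x_t` and `x_s` at the times `t < s` squeezes the difference quotient
of `ψ` between `-f (x_t)` and `-f (x_s)`. Strict concavity makes the maximizer unique, and
compactness of `P` then forces `x_s → x_t` as `s ↓ t`, so that `f (x_s) → f (x_t)`.
-/

open Filter Set Topology

theorem tendsto_of_tendsto_apply_of_unique_isMaxOn {X ι : Type*} [TopologicalSpace X]
    {l : Filter ι} {K : Set X} {φ : X → ℝ} {x₀ : X} {y : ι → X}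
    (hK : IsCompact K) (hφ : ContinuousOn φ K) (hmax : IsMaxOn φ K x₀)
    (huniq : ∀ z ∈ K, IsMaxOn φ K z → z = x₀)
    (hyK : ∀ᶠ i in l, y i ∈ K) (hφy : Tendsto (fun i => φ (y i)) l (𝓝 (φ x₀))) :
    Tendsto y l (𝓝 x₀) := by
  rw [(nhds_basis_opens x₀).tendsto_right_iff]
  rintro U ⟨hx₀U, hU⟩
  rcases (K \ U).eq_empty_or_nonempty with hempty | hne
  · filter_upwards [hyK] with i hi
    by_contra hiU
    exact hempty.subset ⟨hi, hiU⟩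
  · obtain ⟨z, hz, hzmax⟩ := (hK.diff hU).exists_isMaxOn hne (hφ.mono sdiff_subset)
    have hlt : φ z < φ x₀ := by
      by_contra! hle
      have hzK : IsMaxOn φ K z := fun w hw => (hmax hw).trans hle
      exact hz.2 (huniq z hz.1 hzK ▸ hx₀U)
    filter_upwards [hyK, hφy.eventually (lt_mem_nhds hlt)] with i hiK hi
    by_contra hiU
    exact (hzmax ⟨hiK, hiU⟩).not_gt hi

section Envelope

variable {X : Type*} {P : Set X} {g f : X → ℝ} {t : ℝ} {x : ℝ → X}

theorem tendsto_apply_isMaxOn_of_bddBelow (hf : BddBelow (f '' P))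
    (hx : ∀ s ∈ Ici t, x s ∈ P ∧ IsMaxOn (fun y => g y - s * f y) P (x s)) :
    Tendsto (fun s => g (x s) - t * f (x s)) (𝓝[≥] t) (𝓝 (g (x t) - t * f (x t))) := by
  obtain ⟨c, hc⟩ := hf
  have hlower : Tendsto (fun s => g (x t) - t * f (x t) - (s - t) * (f (x t) - c))
      (𝓝[≥] t) (𝓝 (g (x t) - t * f (x t))) := by
    have : Continuous fun s => g (x t) - t * f (x t) - (s - t) * (f (x t) - c) := by fun_prop
    simpa using this.continuousWithinAt.tendsto (s := Ici t) (x := t)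
  refine tendsto_of_tendsto_of_tendsto_of_le_of_le' hlower tendsto_const_nhds ?_ ?_
  · filter_upwards [self_mem_nhdsWithin] with s (hs : t ≤ s)
    have hxs : (s - t) * c ≤ (s - t) * f (x s) :=
      mul_le_mul_of_nonneg_left (hc (mem_image_of_mem f (hx s hs).1)) (sub_nonneg.2 hs)
    have hmax_s : g (x t) - s * f (x t) ≤ g (x s) - s * f (x s) :=
      (hx s hs).2 (hx t self_mem_Ici).1
    linarith
  · filter_upwards [self_mem_nhdsWithin] with s (hs : t ≤ s)
    exact (hx t self_mem_Ici).2 (hx s hs).1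

theorem hasDerivWithinAt_sSup_image_of_isMaxOn
    (hx : ∀ s ∈ Ici t, x s ∈ P ∧ IsMaxOn (fun y => g y - s * f y) P (x s))
    (hfx : Tendsto (fun s => f (x s)) (𝓝[>] t) (𝓝 (f (x t)))) :
    HasDerivWithinAt (fun s => sSup ((fun y => g y - s * f y) '' P)) (-f (x t)) (Ici t) t := by
  have hsup : ∀ s ∈ Ici t, sSup ((fun y => g y - s * f y) '' P) = g (x s) - s * f (x s) :=
    fun s hs =>
      IsGreatest.csSup_eq ⟨mem_image_of_mem _ (hx s hs).1, forall_mem_image.2 (hx s hs).2⟩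
  rw [hasDerivWithinAt_iff_tendsto_slope, Ici_sdiff_left]
  refine tendsto_of_tendsto_of_tendsto_of_le_of_le' tendsto_const_nhds hfx.neg ?_ ?_ <;>
    filter_upwards [self_mem_nhdsWithin] with s (hs : t < s) <;>
    rw [slope_def_field, hsup s hs.le, hsup t self_mem_Ici]
  · have hmax_s : g (x t) - s * f (x t) ≤ g (x s) - s * f (x s) :=
      (hx s hs.le).2 (hx t self_mem_Ici).1
    rw [le_div_iff₀ (sub_pos.2 hs)]
    linarith
  · have hmax_t : g (x s) - t * f (x s) ≤ g (x t) - t * f (x t) :=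
      (hx t self_mem_Ici).2 (hx s hs.le).1
    rw [div_le_iff₀ (sub_pos.2 hs)]
    linarith

end Envelope

theorem stmt12_general {m : ℕ} (P : Set (EuclideanSpace ℝ (Fin m))) (hP : IsCompact P)
    (hPc : Convex ℝ P)
    (u f : EuclideanSpace ℝ (Fin m) → ℝ)
    (hu : ContinuousOn u P) (hus : StrictConvexOn ℝ P u)
    (hf : ContinuousOn f P) (hfc : ConvexOn ℝ P f)
    (ρ : EuclideanSpace ℝ (Fin m)) (t : ℝ) (ht : 0 ≤ t)
    (xt : ℝ → EuclideanSpace ℝ (Fin m))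
    (hxt : ∀ s, 0 ≤ s → xt s ∈ P ∧
      ∀ y ∈ P, ⟪ρ, y⟫ - u y - s * f y ≤ ⟪ρ, xt s⟫ - u (xt s) - s * f (xt s)) :
    HasDerivWithinAt
      (fun s => sSup ((fun x => ⟪ρ, x⟫ - u x - s * f x) '' P))
      (-(f (xt t))) (Set.Ici t) t := by
  have hmax : ∀ s ∈ Ici t,
      xt s ∈ P ∧ IsMaxOn (fun x => ⟪ρ, x⟫ - u x - s * f x) P (xt s) :=
    fun s hs => ⟨(hxt s (ht.trans hs)).1, isMaxOn_iff.2 (hxt s (ht.trans hs)).2⟩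
  obtain ⟨hxtP, hxtmax⟩ := hmax t self_mem_Ici
  have hconc : StrictConcaveOn ℝ P (fun x => ⟪ρ, x⟫ - u x - t * f x) :=
    (((innerₛₗ ℝ ρ).concaveOn hPc).sub_strictConvexOn hus).sub_convexOn (hfc.smul ht)
  have hcont : ContinuousOn (fun x => ⟪ρ, x⟫ - u x - t * f x) P := by fun_prop
  have hxP : ∀ᶠ s in 𝓝[≥] t, xt s ∈ P :=
    eventually_nhdsWithin_of_forall fun s hs => (hmax s hs).1
  have hxlim : Tendsto xt (𝓝[≥] t) (𝓝 (xt t)) :=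
    tendsto_of_tendsto_apply_of_unique_isMaxOn hP hcont hxtmax
      (fun z hz hzmax => hconc.eq_of_isMaxOn hzmax hxtmax hz hxtP)
      hxP (tendsto_apply_isMaxOn_of_bddBelow (hP.bddBelow_image hf) hmax)
  have hfx : Tendsto (fun s => f (xt s)) (𝓝[≥] t) (𝓝 (f (xt t))) :=
    (hf _ hxtP).tendsto.comp (tendsto_nhdsWithin_iff.2 ⟨hxlim, hxP⟩)
  exact hasDerivWithinAt_sSup_image_of_isMaxOn hmax
    (hfx.mono_left (nhdsWithin_mono _ Ioi_subset_Ici_self))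

/-- Envelope formula: the (right) `t`-derivative of
`ψ(t,ρ) = sup_{x ∈ P} (⟨ρ,x⟩ - u(x) - t f(x))` equals `-f(x_t(ρ))`, where
`x_t(ρ)` is the unique maximizer. -/
theorem stmt12 {m : ℕ} (P : Set (EuclideanSpace ℝ (Fin m))) (hP : IsCompact P)
    (hPc : Convex ℝ P) (hPne : P.Nonempty)
    (u f : EuclideanSpace ℝ (Fin m) → ℝ)
    (hu : ContinuousOn u P) (hus : StrictConvexOn ℝ P u)
    (hf : ContinuousOn f P) (hfc : ConvexOn ℝ P f)
    (ρ : EuclideanSpace ℝ (Fin m)) (t : ℝ) (ht : 0 ≤ t)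
    (xt : ℝ → EuclideanSpace ℝ (Fin m))
    (hxt : ∀ s, 0 ≤ s → xt s ∈ P ∧
      ∀ y ∈ P, ⟪ρ, y⟫ - u y - s * f y ≤ ⟪ρ, xt s⟫ - u (xt s) - s * f (xt s)) :
    HasDerivWithinAt
      (fun s => sSup ((fun x => ⟪ρ, x⟫ - u x - s * f x) '' P))
      (-(f (xt t))) (Set.Ici t) t :=
  stmt12_general P hP hPc u f hu hus hf hfc ρ t ht xt hxt
end

section
/- Varadhan's Lemma for measures on a compact set: if probability measures μ_k on a compact metric space X satisfy the large deviation principle with speed k and rate function I, and F : X → ℝ is continuous, then lim_{k→∞} (1/k) log ∫_X e^{kF(x)} dμ_k(x) = sup_{x ∈ X}(F(x) − I(x)). -/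
open MeasureTheory Filter
open scoped ENNReal

/-! Write `J k = ∫ e^{kF} dμ_k` and `L = sup (F - I)`; it suffices to compare `J k` with
`e^{kc}` for real `c` on either side of `L`. If `c < L`, pick `x₀` with `c < F x₀ - I x₀` and
`a < F x₀` close to `F x₀`: then `J k ≥ e^{ka} μ_k {F > a}`, and the LDP lower bound on the open set
`{F > a}` makes this eventually exceed `e^{kc}`. If `L < d < c`, cover the compact space by finitely
many closed sets `F⁻¹' [a - δ, a + δ]`; on each of them `I ≥ F - d`, so the LDP upper bound gives
`∫_C e^{kF} dμ_k ≤ e^{k(d + 3δ)}` eventually, and a finite sum of such terms stays below `e^{kc}`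
once `d + 3δ < c`. -/

lemma ENNReal.log_ofReal_exp (x : ℝ) : ENNReal.log (ENNReal.ofReal (Real.exp x)) = x := by
  rw [ENNReal.log_ofReal_of_pos (Real.exp_pos x), Real.log_exp]

lemma ENNReal.ofReal_exp_mul_ofReal_exp (x y : ℝ) :
    ENNReal.ofReal (Real.exp x) * ENNReal.ofReal (Real.exp y)
      = ENNReal.ofReal (Real.exp (x + y)) := by
  rw [← ENNReal.ofReal_mul (Real.exp_pos x).le, Real.exp_add]

noncomputable def scaledLog (k : ℕ) (m : ℝ≥0∞) : EReal := (((k : ℝ)⁻¹ : ℝ) : EReal) * ENNReal.log m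

lemma scaledLog_eq_log_div {k : ℕ} (m : ℝ≥0∞) : scaledLog k m = ENNReal.log m / (k : ℝ) := by
  rw [scaledLog, EReal.coe_inv, mul_comm, div_eq_mul_inv]

lemma scaledLog_lt_iff {k : ℕ} (hk : 0 < k) {m : ℝ≥0∞} {c : ℝ} :
    scaledLog k m < c ↔ m < ENNReal.ofReal (Real.exp (k * c)) := by
  have hk' : (0 : EReal) < (k : ℝ) := EReal.coe_pos.2 (Nat.cast_pos.2 hk)
  rw [scaledLog_eq_log_div, EReal.div_lt_iff hk' (EReal.coe_ne_top _), ← EReal.coe_mul, mul_comm,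
    ← ENNReal.log_ofReal_exp, ENNReal.log_lt_log_iff]

lemma lt_scaledLog_iff {k : ℕ} (hk : 0 < k) {m : ℝ≥0∞} {c : ℝ} :
    (c : EReal) < scaledLog k m ↔ ENNReal.ofReal (Real.exp (k * c)) < m := by
  have hk' : (0 : EReal) < (k : ℝ) := EReal.coe_pos.2 (Nat.cast_pos.2 hk)
  rw [scaledLog_eq_log_div, EReal.lt_div_iff hk' (EReal.coe_ne_top _), ← EReal.coe_mul, mul_comm,
    ← ENNReal.log_ofReal_exp, ENNReal.log_lt_log_iff]

lemma EReal.coe_sub_coe_ennreal_le_iff {u v : ℝ} {y : ℝ≥0∞} :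
    (u : EReal) - y ≤ v ↔ ((u - v : ℝ) : EReal) ≤ y := by
  induction y using ENNReal.recTopCoe with
  | top => simp
  | coe y =>
    rw [EReal.coe_nnreal_eq_coe_real, ← EReal.coe_sub, EReal.coe_le_coe_iff, EReal.coe_le_coe_iff]
    constructor <;> intro h <;> linarith

lemma EReal.lt_coe_sub_coe_ennreal_iff {c u : ℝ} {y : ℝ≥0∞} :
    (c : EReal) < u - y ↔ (y : EReal) < ((u - c : ℝ) : EReal) := by
  induction y using ENNReal.recTopCoe with
  | top => simp
  | coe y =>
    rw [EReal.coe_nnreal_eq_coe_real, ← EReal.coe_sub, EReal.coe_lt_coe_iff, EReal.coe_lt_coe_iff]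
    constructor <;> intro h <;> linarith

lemma log_integral_exp_eq_log_lintegral {α : Type*} [MeasurableSpace α] {μ : Measure α} [NeZero μ]
    {f : α → ℝ} (hf : Integrable (fun x => Real.exp (f x)) μ) :
    ((Real.log (∫ x, Real.exp (f x) ∂μ) : ℝ) : EReal)
      = ENNReal.log (∫⁻ x, ENNReal.ofReal (Real.exp (f x)) ∂μ) := by
  rw [← ofReal_integral_eq_lintegral_ofReal hf (ae_of_all _ fun x => (Real.exp_pos _).le),
    ENNReal.log_ofReal_of_pos (integral_exp_pos hf)]

lemma lintegral_le_sum_setLIntegral {α ι : Type*} [MeasurableSpace α] (μ : Measure α)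
    {s : Finset ι} {C : ι → Set α} (hC : ∀ x, ∃ i ∈ s, x ∈ C i) (f : α → ℝ≥0∞) :
    ∫⁻ x, f x ∂μ ≤ ∑ i ∈ s, ∫⁻ x in C i, f x ∂μ := by
  have hcover : (⋃ i ∈ (s : Set ι), C i) = Set.univ :=
    Set.eq_univ_of_forall fun x => by simpa using hC x
  calc ∫⁻ x, f x ∂μ = ∫⁻ x in ⋃ i ∈ (s : Set ι), C i, f x ∂μ := by
        rw [hcover, Measure.restrict_univ]
    _ ≤ ∫⁻ x, f x ∂(Measure.sum fun i : (s : Set ι) => μ.restrict (C i)) :=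
        lintegral_mono' (Measure.restrict_biUnion_le s.countable_toSet) le_rfl
    _ = ∑ i ∈ s, ∫⁻ x in C i, f x ∂μ := by
        rw [lintegral_sum_measure, tsum_fintype]
        exact Finset.sum_coe_sort s fun i => ∫⁻ x in C i, f x ∂μ

lemma exists_finset_forall_mem_Icc {X : Type*} [TopologicalSpace X] [CompactSpace X]
    {F : X → ℝ} (hF : Continuous F) {ε : ℝ} (hε : 0 < ε) :
    ∃ s : Finset ℝ, ∀ x, ∃ a ∈ s, F x ∈ Set.Icc (a - ε) (a + ε) := by
  obtain ⟨s, hs⟩ := isCompact_univ.elim_finite_subcover (fun a : ℝ => F ⁻¹' Metric.ball a ε)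
    (fun a => Metric.isOpen_ball.preimage hF)
    (fun x _ => Set.mem_iUnion.2 ⟨F x, Metric.mem_ball_self hε⟩)
  refine ⟨s, fun x => ?_⟩
  obtain ⟨a, ha, hx⟩ := Set.mem_iUnion₂.1 (hs (Set.mem_univ x))
  exact ⟨a, ha, Real.closedBall_eq_Icc ▸ Metric.ball_subset_closedBall hx⟩

lemma eventually_sum_lt_ofReal_exp {ι : Type*} (s : Finset ι) {f : ι → ℕ → ℝ≥0∞} {e c : ℝ}
    (hf : ∀ i ∈ s, ∀ᶠ k in atTop, f i k ≤ ENNReal.ofReal (Real.exp (k * e))) (hec : e < c) :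
    ∀ᶠ k in atTop, ∑ i ∈ s, f i k < ENNReal.ofReal (Real.exp (k * c)) := by
  have hcard : ∀ᶠ k : ℕ in atTop, (s.card : ℝ) < Real.exp (k * (c - e)) :=
    (Real.tendsto_exp_atTop.comp
      (tendsto_natCast_atTop_atTop.atTop_mul_const (sub_pos.2 hec))).eventually_gt_atTop _
  filter_upwards [(eventually_all_finset s).2 hf, hcard] with k hfk hk
  calc ∑ i ∈ s, f i k ≤ s.card • ENNReal.ofReal (Real.exp (k * e)) :=
        Finset.sum_le_card_nsmul _ _ _ hfk
    _ = ENNReal.ofReal (s.card * Real.exp (k * e)) := by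
        rw [nsmul_eq_mul, ENNReal.ofReal_mul (Nat.cast_nonneg _), ENNReal.ofReal_natCast]
    _ < ENNReal.ofReal (Real.exp (k * c)) := by
        rw [ENNReal.ofReal_lt_ofReal_iff (Real.exp_pos _)]
        calc (s.card : ℝ) * Real.exp (k * e) < Real.exp (k * (c - e)) * Real.exp (k * e) :=
              mul_lt_mul_of_pos_right hk (Real.exp_pos _)
          _ = Real.exp (k * c) := by rw [← Real.exp_add]; ring_nf

lemma ofReal_exp_mul_measure_le_lintegral {α : Type*} [MeasurableSpace α] (μ : Measure α)
    {F : α → ℝ} (hF : Measurable F) {U : Set α} {k a : ℝ} (hk : 0 ≤ k) (haF : ∀ x ∈ U, a ≤ F x) :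
    ENNReal.ofReal (Real.exp (k * a)) * μ U ≤ ∫⁻ x, ENNReal.ofReal (Real.exp (k * F x)) ∂μ := by
  refine le_trans ?_ (mul_meas_ge_le_lintegral (by fun_prop) (ENNReal.ofReal (Real.exp (k * a))))
  refine mul_le_mul_right (measure_mono fun x hx => ?_) _
  exact ENNReal.ofReal_le_ofReal (Real.exp_le_exp.2 (mul_le_mul_of_nonneg_left (haF x hx) hk))

lemma setLIntegral_le_ofReal_exp_mul_measure {α : Type*} [MeasurableSpace α] (μ : Measure α)
    {F : α → ℝ} {C : Set α} {k b : ℝ} (hk : 0 ≤ k) (hFb : ∀ x ∈ C, F x ≤ b) :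
    ∫⁻ x in C, ENNReal.ofReal (Real.exp (k * F x)) ∂μ
      ≤ ENNReal.ofReal (Real.exp (k * b)) * μ C := by
  rw [← setLIntegral_const]
  refine setLIntegral_mono measurable_const fun x hx => ?_
  gcongr
  exact hFb x hx

section LargeDeviations

variable {X : Type*} [MeasurableSpace X] {μ : ℕ → Measure X} {I : X → ℝ≥0∞} {F : X → ℝ}

lemma eventually_ofReal_exp_lt_lintegral (hF : Measurable F) {U : Set X}
    (hU : -⨅ x ∈ U, (I x : EReal) ≤ liminf (fun k => scaledLog k (μ k U)) atTop)
    {x₀ : X} (hx₀ : x₀ ∈ U) {a t c : ℝ} (haF : ∀ x ∈ U, a ≤ F x) (ht : (I x₀ : EReal) ≤ t)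
    (hc : c + t < a) :
    ∀ᶠ k : ℕ in atTop, ENNReal.ofReal (Real.exp (k * c))
      < ∫⁻ x, ENNReal.ofReal (Real.exp (k * F x)) ∂μ k := by
  have hliminf : ((c - a : ℝ) : EReal) < liminf (fun k => scaledLog k (μ k U)) atTop := by
    refine lt_of_lt_of_le ?_ hU
    calc ((c - a : ℝ) : EReal) < ((-t : ℝ) : EReal) := EReal.coe_lt_coe_iff.2 (by linarith)
      _ ≤ -⨅ x ∈ U, (I x : EReal) := by
        rw [EReal.coe_neg, EReal.neg_le_neg_iff]
        exact (iInf₂_le x₀ hx₀).trans ht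
  filter_upwards [eventually_lt_of_lt_liminf hliminf, eventually_gt_atTop 0] with k hμU hk
  rw [lt_scaledLog_iff hk] at hμU
  calc ENNReal.ofReal (Real.exp (k * c))
      = ENNReal.ofReal (Real.exp (k * a)) * ENNReal.ofReal (Real.exp (k * (c - a))) := by
        rw [ENNReal.ofReal_exp_mul_ofReal_exp]; ring_nf
    _ < ENNReal.ofReal (Real.exp (k * a)) * μ k U :=
        ENNReal.mul_lt_mul_right (by simp [Real.exp_pos]) ENNReal.ofReal_ne_top hμU
    _ ≤ _ := ofReal_exp_mul_measure_le_lintegral _ hF k.cast_nonneg haF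

lemma eventually_setLIntegral_le_ofReal_exp {C : Set X}
    (hC : limsup (fun k => scaledLog k (μ k C)) atTop ≤ -⨅ x ∈ C, (I x : EReal))
    {a b d δ : ℝ} (hδ : 0 < δ) (hFC : ∀ x ∈ C, F x ∈ Set.Icc a b)
    (hd : ∀ x ∈ C, (F x : EReal) - I x ≤ d) :
    ∀ᶠ k : ℕ in atTop, ∫⁻ x in C, ENNReal.ofReal (Real.exp (k * F x)) ∂μ k
      ≤ ENNReal.ofReal (Real.exp (k * (d + (b - a) + δ))) := by
  have hI : ((a - d : ℝ) : EReal) ≤ ⨅ x ∈ C, (I x : EReal) := le_iInf₂ fun x hx =>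
    (EReal.coe_le_coe_iff.2 (by linarith [(hFC x hx).1])).trans
      (EReal.coe_sub_coe_ennreal_le_iff.1 (hd x hx))
  have hlimsup : limsup (fun k => scaledLog k (μ k C)) atTop < ((d - a + δ : ℝ) : EReal) := by
    refine hC.trans_lt ?_
    calc -⨅ x ∈ C, (I x : EReal) ≤ ((d - a : ℝ) : EReal) := by
          rw [EReal.neg_le, ← EReal.coe_neg, neg_sub]; exact hI
      _ < ((d - a + δ : ℝ) : EReal) := EReal.coe_lt_coe_iff.2 (by linarith)
  filter_upwards [eventually_lt_of_limsup_lt hlimsup, eventually_gt_atTop 0] with k hμC hk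
  rw [scaledLog_lt_iff hk] at hμC
  calc ∫⁻ x in C, ENNReal.ofReal (Real.exp (k * F x)) ∂μ k
      ≤ ENNReal.ofReal (Real.exp (k * b)) * μ k C :=
        setLIntegral_le_ofReal_exp_mul_measure _ k.cast_nonneg fun x hx => (hFC x hx).2
    _ ≤ ENNReal.ofReal (Real.exp (k * b)) * ENNReal.ofReal (Real.exp (k * (d - a + δ))) := by
        gcongr
    _ = ENNReal.ofReal (Real.exp (k * (d + (b - a) + δ))) := by
        rw [ENNReal.ofReal_exp_mul_ofReal_exp]; ring_nf

lemma eventually_ofReal_exp_lt_lintegral_of_lt_iSup [TopologicalSpace X] [OpensMeasurableSpace X]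
    (hlb : ∀ U : Set X, IsOpen U →
      -⨅ x ∈ U, (I x : EReal) ≤ liminf (fun k => scaledLog k (μ k U)) atTop)
    (hF : Continuous F) {c : ℝ} (hc : (c : EReal) < ⨆ x, ((F x : EReal) - I x)) :
    ∀ᶠ k : ℕ in atTop, ENNReal.ofReal (Real.exp (k * c))
      < ∫⁻ x, ENNReal.ofReal (Real.exp (k * F x)) ∂μ k := by
  obtain ⟨x₀, hx₀⟩ := lt_iSup_iff.1 hc
  obtain ⟨t, hIt, htF⟩ := EReal.lt_iff_exists_real_btwn.1 (EReal.lt_coe_sub_coe_ennreal_iff.1 hx₀)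
  obtain ⟨a, hca, haF⟩ := exists_between (lt_sub_iff_add_lt.1 (EReal.coe_lt_coe_iff.1 htF))
  exact eventually_ofReal_exp_lt_lintegral hF.measurable (hlb _ (isOpen_lt continuous_const hF))
    haF (fun _ hx => hx.le) hIt.le (by linarith)

lemma eventually_lintegral_lt_ofReal_exp_of_iSup_lt [TopologicalSpace X] [CompactSpace X]
    (hub : ∀ C : Set X, IsClosed C →
      limsup (fun k => scaledLog k (μ k C)) atTop ≤ -⨅ x ∈ C, (I x : EReal))
    (hF : Continuous F) {c : ℝ} (hc : ⨆ x, ((F x : EReal) - I x) < c) :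
    ∀ᶠ k : ℕ in atTop, ∫⁻ x, ENNReal.ofReal (Real.exp (k * F x)) ∂μ k
      < ENNReal.ofReal (Real.exp (k * c)) := by
  obtain ⟨d, hLd, hdc⟩ := EReal.lt_iff_exists_real_btwn.1 hc
  rw [EReal.coe_lt_coe_iff] at hdc
  have hd : ∀ x, (F x : EReal) - I x ≤ d := fun x => (le_iSup _ x).trans hLd.le
  obtain ⟨δ, hδpos, hδc⟩ : ∃ δ : ℝ, 0 < δ ∧ d + 3 * δ < c :=
    ⟨(c - d) / 4, by linarith, by linarith⟩
  obtain ⟨s, hs⟩ := exists_finset_forall_mem_Icc hF hδpos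
  let C : ℝ → Set X := fun a => F ⁻¹' Set.Icc (a - δ) (a + δ)
  have hC : ∀ a ∈ s, ∀ᶠ k : ℕ in atTop, ∫⁻ x in C a, ENNReal.ofReal (Real.exp (k * F x)) ∂μ k
      ≤ ENNReal.ofReal (Real.exp (k * (d + 3 * δ))) := fun a _ => by
    convert eventually_setLIntegral_le_ofReal_exp (hub _ (isClosed_Icc.preimage hF)) hδpos
      (fun x hx => hx) (fun x _ => hd x) using 5
    ring
  filter_upwards [eventually_sum_lt_ofReal_exp s hC hδc] with k hk
  exact (lintegral_le_sum_setLIntegral _ hs _).trans_lt hk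

end LargeDeviations

theorem stmt15_general {X : Type*} [MetricSpace X] [CompactSpace X]
    [MeasurableSpace X] [BorelSpace X]
    (μ : ℕ → Measure X) [∀ k, IsProbabilityMeasure (μ k)]
    (I : X → ℝ≥0∞)
    (hub : ∀ C : Set X, IsClosed C →
      Filter.atTop.limsup (fun k : ℕ => (((k : ℝ)⁻¹ : ℝ) : EReal) * ENNReal.log (μ k C))
        ≤ - ⨅ x ∈ C, (I x : EReal))
    (hlb : ∀ U : Set X, IsOpen U →
      - ⨅ x ∈ U, (I x : EReal)
        ≤ Filter.atTop.liminf
            (fun k : ℕ => (((k : ℝ)⁻¹ : ℝ) : EReal) * ENNReal.log (μ k U)))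
    (F : X → ℝ) (hF : Continuous F) :
    Filter.Tendsto
      (fun k : ℕ =>
        (((k : ℝ)⁻¹ * Real.log (∫ x, Real.exp ((k : ℝ) * F x) ∂ μ k) : ℝ) : EReal))
      Filter.atTop
      (nhds (⨆ x, ((F x : EReal) - (I x : EReal)))) := by
  have hscaled : ∀ k : ℕ,
      (((k : ℝ)⁻¹ * Real.log (∫ x, Real.exp ((k : ℝ) * F x) ∂ μ k) : ℝ) : EReal)
        = scaledLog k (∫⁻ x, ENNReal.ofReal (Real.exp (k * F x)) ∂μ k) := fun k => by
    rw [scaledLog, EReal.coe_mul, log_integral_exp_eq_log_lintegral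
      ((by fun_prop : Continuous fun x => Real.exp (k * F x)).integrable_of_hasCompactSupport
        (HasCompactSupport.of_compactSpace _))]
  simp_rw [hscaled]
  refine tendsto_order.2 ⟨fun b hb => ?_, fun b hb => ?_⟩
  · obtain ⟨c, hbc, hc⟩ := EReal.lt_iff_exists_real_btwn.1 hb
    filter_upwards [eventually_ofReal_exp_lt_lintegral_of_lt_iSup hlb hF hc, eventually_gt_atTop 0]
      with k hk hk0
    exact hbc.trans ((lt_scaledLog_iff hk0).2 hk)
  · obtain ⟨c, hc, hcb⟩ := EReal.lt_iff_exists_real_btwn.1 hb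
    filter_upwards [eventually_lintegral_lt_ofReal_exp_of_iSup_lt hub hF hc, eventually_gt_atTop 0]
      with k hk hk0
    exact ((scaledLog_lt_iff hk0).2 hk).trans hcb

/-- Varadhan's Lemma on a compact metric space: under the large deviation
principle with speed `k` and rate function `I`, for continuous `F`,
`(1/k) log ∫ e^{kF} dμ_k → sup_x (F(x) - I(x))`. -/
theorem stmt15 {X : Type*} [MetricSpace X] [CompactSpace X]
    [MeasurableSpace X] [BorelSpace X]
    (μ : ℕ → Measure X) [∀ k, IsProbabilityMeasure (μ k)]
    (I : X → ℝ≥0∞) (hlsc : LowerSemicontinuous I)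
    (hub : ∀ C : Set X, IsClosed C →
      Filter.atTop.limsup (fun k : ℕ => (((k : ℝ)⁻¹ : ℝ) : EReal) * ENNReal.log (μ k C))
        ≤ - ⨅ x ∈ C, (I x : EReal))
    (hlb : ∀ U : Set X, IsOpen U →
      - ⨅ x ∈ U, (I x : EReal)
        ≤ Filter.atTop.liminf
            (fun k : ℕ => (((k : ℝ)⁻¹ : ℝ) : EReal) * ENNReal.log (μ k U)))
    (F : X → ℝ) (hF : Continuous F) :
    Filter.Tendsto
      (fun k : ℕ =>
        (((k : ℝ)⁻¹ * Real.log (∫ x, Real.exp ((k : ℝ) * F x) ∂ μ k) : ℝ) : EReal))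
      Filter.atTop
      (nhds (⨆ x, ((F x : EReal) - (I x : EReal)))) :=
  stmt15_general μ I hub hlb F hF
end
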